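/- arXiv:2202.08380 — 2 statements merged into one kernel-verified Lean document; each statement's English description precedes it below -/
import Mathlib

section
/- For every s ∈ [0,1/2] there exist a Hermitian matrix R on ℂ³⊗ℂ³ and a Hermitian matrix S on ℂ³ such that R − T_b(J^s), R + T_b(J^s), I₃⊗S − T_b(R), and I₃⊗S + T_b(R) are all positive semidefinite and Tr(S) = 2. (This exhibits a feasible point of the Wang–Xie–Duan semidefinite program, establishing β(N_s) ≤ 2 and hence the strong-converse classical-capacity bound C(N_s) ≤ log₂ β(N_s) ≤ 1; one may take R = s|00⟩⟨00| + (1−s)|01⟩⟨01| + |02⟩⟨02| + |ψ⟩⟨ψ| + |12⟩⟨12| + |22⟩⟨22| with |ψ⟩ = √s|1⟩⊗|0⟩ + √(1−s)|2⟩⊗|1⟩, and S = s|0⟩⟨0| + (1−s)|1⟩⟨1| + |2⟩⟨2|.) -/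
/-!
Let `D` be the diagonal matrix with entries `s, 1 - s, 1, 1` at `|00⟩, |01⟩, |12⟩, |22⟩` and
`ψ = √s |10⟩ + √(1 - s) |21⟩`. Then `T_b(J^s) = D + |02⟩⟨ψ| + |ψ⟩⟨02|` and
`R = D + |02⟩⟨02| + |ψ⟩⟨ψ|`, so `R - T_b(J^s) = |02 - ψ⟩⟨02 - ψ|` and
`R + T_b(J^s) = 2D + |02 + ψ⟩⟨02 + ψ|` are positive semidefinite. The second pair has the same
shape: `I₃ ⊗ S` and `T_b(R)` share a nonnegative diagonal part, to which the first adds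
`|u⟩⟨u| + |v⟩⟨v|` and the second `|u⟩⟨v| + |v⟩⟨u|`, where `u = √(1 - s) |11⟩` and `v = √s |20⟩`.
-/

open Matrix Kronecker ComplexOrder

/-- Partial transpose on the second tensor factor. -/
noncomputable def ptransposeB {m n : ℕ}
    (M : Matrix (Fin m × Fin n) (Fin m × Fin n) ℂ) :
    Matrix (Fin m × Fin n) (Fin m × Fin n) ℂ :=
  Matrix.of fun p q => M (p.1, q.2) (q.1, p.2)

/-- |ψ₁⟩ = √s |0⟩⊗|0⟩ + |1⟩⊗|2⟩. -/
noncomputable def psi1 (s : ℝ) : Fin 3 × Fin 3 → ℂ := fun p =>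
  if p = (0, 0) then (Real.sqrt s : ℂ) else if p = (1, 2) then 1 else 0

/-- |ψ₂⟩ = √(1−s) |0⟩⊗|1⟩ + |2⟩⊗|2⟩. -/
noncomputable def psi2 (s : ℝ) : Fin 3 × Fin 3 → ℂ := fun p =>
  if p = (0, 1) then (Real.sqrt (1 - s) : ℂ) else if p = (2, 2) then 1 else 0

/-- The unnormalized Choi operator J^s = |ψ₁⟩⟨ψ₁| + |ψ₂⟩⟨ψ₂| of the channel N_s. -/
noncomputable def choiNs (s : ℝ) : Matrix (Fin 3 × Fin 3) (Fin 3 × Fin 3) ℂ :=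
  Matrix.vecMulVec (psi1 s) (star (psi1 s)) + Matrix.vecMulVec (psi2 s) (star (psi2 s))

theorem Matrix.PosSemidef.sub_and_add_of_eq {n R : Type*} [Finite n] [CommRing R]
    [PartialOrder R] [StarRing R] [StarOrderedRing R] {A B D : Matrix n n R}
    (hD : D.PosSemidef) {u v : n → R}
    (hA : A = D + vecMulVec u (star u) + vecMulVec v (star v))
    (hB : B = D + (vecMulVec u (star v) + vecMulVec v (star u))) :
    (A - B).PosSemidef ∧ (A + B).PosSemidef := by
  have hsub : A - B = vecMulVec (u - v) (star (u - v)) := by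
    rw [hA, hB]
    simp only [star_sub, sub_vecMulVec, vecMulVec_sub]
    abel
  have hadd : A + B = D + D + vecMulVec (u + v) (star (u + v)) := by
    rw [hA, hB]
    simp only [star_add, add_vecMulVec, vecMulVec_add]
    abel
  rw [hsub, hadd]
  exact ⟨posSemidef_vecMulVec_self_star _, (hD.add hD).add (posSemidef_vecMulVec_self_star _)⟩

-- `ket C` is the vector `∑ i j, C i j • |i⟩ ⊗ |j⟩`.
def ket {ι κ : Type*} (C : Matrix ι κ ℂ) : ι × κ → ℂ := fun p => C p.1 p.2

noncomputable def productDiagonal {ι κ : Type*} [DecidableEq ι] [DecidableEq κ]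
    (W : Matrix ι κ ℝ) : Matrix (ι × κ) (ι × κ) ℂ :=
  diagonal fun p => (W p.1 p.2 : ℂ)

theorem posSemidef_productDiagonal {ι κ : Type*} [DecidableEq ι] [DecidableEq κ]
    {W : Matrix ι κ ℝ} (hW : ∀ i j, 0 ≤ W i j) : (productDiagonal W).PosSemidef :=
  PosSemidef.diagonal fun p => Complex.zero_le_real.mpr (hW p.1 p.2)

section FeasiblePoint

variable (a b : ℝ)

def choiWeights : Matrix (Fin 3) (Fin 3) ℝ := !![a ^ 2, b ^ 2, 0; 0, 0, 1; 0, 0, 1]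

def kronWeights : Matrix (Fin 3) (Fin 3) ℝ := !![a ^ 2, b ^ 2, 1; a ^ 2, 0, 1; 0, b ^ 2, 1]

def ket02 : Fin 3 × Fin 3 → ℂ := ket !![0, 0, 1; 0, 0, 0; 0, 0, 0]

noncomputable def psi : Fin 3 × Fin 3 → ℂ := ket !![0, 0, 0; (a : ℂ), 0, 0; 0, (b : ℂ), 0]

noncomputable def ket11 : Fin 3 × Fin 3 → ℂ := ket !![0, 0, 0; 0, (b : ℂ), 0; 0, 0, 0]

noncomputable def ket20 : Fin 3 × Fin 3 → ℂ := ket !![0, 0, 0; 0, 0, 0; (a : ℂ), 0, 0]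

noncomputable def feasibleR : Matrix (Fin 3 × Fin 3) (Fin 3 × Fin 3) ℂ :=
  productDiagonal (choiWeights a b) + vecMulVec ket02 (star ket02) +
    vecMulVec (psi a b) (star (psi a b))

noncomputable def feasibleS : Matrix (Fin 3) (Fin 3) ℂ := diagonal ![(a : ℂ) ^ 2, (b : ℂ) ^ 2, 1]

theorem choiWeights_nonneg (i j : Fin 3) : 0 ≤ choiWeights a b i j := by
  fin_cases i <;> fin_cases j <;> simp [choiWeights, sq_nonneg]

theorem kronWeights_nonneg (i j : Fin 3) : 0 ≤ kronWeights a b i j := by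
  fin_cases i <;> fin_cases j <;> simp [kronWeights, sq_nonneg]

theorem feasibleR_posSemidef : (feasibleR a b).PosSemidef :=
  ((posSemidef_productDiagonal (choiWeights_nonneg a b)).add
    (posSemidef_vecMulVec_self_star _)).add (posSemidef_vecMulVec_self_star _)

theorem feasibleS_posSemidef : (feasibleS a b).PosSemidef := by
  refine PosSemidef.diagonal fun i => ?_
  fin_cases i <;> simp [← Complex.ofReal_pow, sq_nonneg]

theorem feasibleS_trace : (feasibleS a b).trace = ((a ^ 2 + b ^ 2 + 1 : ℝ) : ℂ) := by
  simp [feasibleS, trace, Fin.sum_univ_three]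

theorem ptransposeB_choiNs (s : ℝ) :
    ptransposeB (choiNs s) = productDiagonal (choiWeights √s √(1 - s)) +
      (vecMulVec ket02 (star (psi √s √(1 - s))) + vecMulVec (psi √s √(1 - s)) (star ket02)) := by
  ext ⟨i, j⟩ ⟨k, l⟩
  simp only [ptransposeB, choiNs, psi1, psi2, psi, ket02, productDiagonal, ket, of_apply,
    Matrix.add_apply, diagonal_apply, vecMulVec_apply, Pi.star_apply, Prod.mk.injEq]
  fin_cases i <;> fin_cases j <;> fin_cases k <;> fin_cases l <;> simp [choiWeights, sq]

theorem ptransposeB_feasibleR :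
    ptransposeB (feasibleR a b) = productDiagonal (kronWeights a b) +
      (vecMulVec (ket11 b) (star (ket20 a)) + vecMulVec (ket20 a) (star (ket11 b))) := by
  ext ⟨i, j⟩ ⟨k, l⟩
  simp only [ptransposeB, feasibleR, psi, ket02, ket11, ket20, productDiagonal, ket, of_apply,
    Matrix.add_apply, diagonal_apply, vecMulVec_apply, Pi.star_apply, Prod.mk.injEq]
  fin_cases i <;> fin_cases j <;> fin_cases k <;> fin_cases l <;>
    simp [choiWeights, kronWeights, sq, mul_comm]

theorem one_kronecker_feasibleS :
    (1 : Matrix (Fin 3) (Fin 3) ℂ) ⊗ₖ feasibleS a b = productDiagonal (kronWeights a b) +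
      vecMulVec (ket11 b) (star (ket11 b)) + vecMulVec (ket20 a) (star (ket20 a)) := by
  ext ⟨i, j⟩ ⟨k, l⟩
  simp only [feasibleS, ket11, ket20, productDiagonal, ket, of_apply, kroneckerMap_apply,
    one_apply, Matrix.add_apply, diagonal_apply, vecMulVec_apply, Pi.star_apply, Prod.mk.injEq]
  fin_cases i <;> fin_cases j <;> fin_cases k <;> fin_cases l <;> simp [kronWeights, sq]

end FeasiblePoint

/-- Feasible point for the Wang–Xie–Duan SDP: β(N_s) ≤ 2, hence C(N_s) ≤ 1. -/
theorem stmt3 (s : ℝ) (hs : s ∈ Set.Icc (0 : ℝ) (1/2)) :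
    ∃ (R : Matrix (Fin 3 × Fin 3) (Fin 3 × Fin 3) ℂ) (S : Matrix (Fin 3) (Fin 3) ℂ),
      R.IsHermitian ∧ S.IsHermitian ∧
      (R - ptransposeB (choiNs s)).PosSemidef ∧
      (R + ptransposeB (choiNs s)).PosSemidef ∧
      ((1 : Matrix (Fin 3) (Fin 3) ℂ) ⊗ₖ S - ptransposeB R).PosSemidef ∧
      ((1 : Matrix (Fin 3) (Fin 3) ℂ) ⊗ₖ S + ptransposeB R).PosSemidef ∧
      S.trace = 2 := by
  obtain ⟨hs0, hs1⟩ := hs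
  obtain ⟨hRJ₁, hRJ₂⟩ := (posSemidef_productDiagonal
    (choiWeights_nonneg √s √(1 - s))).sub_and_add_of_eq rfl (ptransposeB_choiNs s)
  obtain ⟨hSR₁, hSR₂⟩ := (posSemidef_productDiagonal
    (kronWeights_nonneg √s √(1 - s))).sub_and_add_of_eq (one_kronecker_feasibleS _ _)
      (ptransposeB_feasibleR _ _)
  refine ⟨_, _, (feasibleR_posSemidef √s √(1 - s)).isHermitian,
    (feasibleS_posSemidef √s √(1 - s)).isHermitian, hRJ₁, hRJ₂, hSR₁, hSR₂, ?_⟩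
  rw [feasibleS_trace, Real.sq_sqrt hs0, Real.sq_sqrt (by linarith)]
  norm_num
end

section
/- Assume additionally that μ_j > 0 for all 0 ≤ j ≤ d−2. Then there exists a density matrix ρ on ℂ^d with S(O(ρ)) − S(O^c(ρ)) > 0; that is, the channel coherent information Q^{(1)}(O) is strictly positive. -/
open Matrix ComplexOrder

/-- Von Neumann entropy (base-2) of a matrix: −∑ λᵢ log₂ λᵢ over its eigenvalues
(0 if the matrix is not Hermitian). -/
noncomputable def vnEntropy {n : ℕ} (ρ : Matrix (Fin n) (Fin n) ℂ) : ℝ :=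
  if h : ρ.IsHermitian then -∑ i, (h.eigenvalues i) * Real.logb 2 (h.eigenvalues i) else 0

/-- The basis ket |i⟩ of ℂ^d (zero if out of range). -/
noncomputable def bket (d i : ℕ) : Fin d → ℂ := fun p => if (p : ℕ) = i then 1 else 0

/-- The projector |i⟩⟨i| on ℂ^d. -/
noncomputable def bproj (d i : ℕ) : Matrix (Fin d) (Fin d) ℂ :=
  Matrix.vecMulVec (bket d i) (star (bket d i))

/-- Kraus operator K_k = μ_k|k⟩⟨0| + |d−1⟩⟨k+1| of the channel O. -/
noncomputable def KrO (d : ℕ) (μ : ℕ → ℝ) (k : ℕ) : Matrix (Fin d) (Fin d) ℂ :=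
  ((μ k : ℝ) : ℂ) • Matrix.vecMulVec (bket d k) (star (bket d 0)) +
    Matrix.vecMulVec (bket d (d-1)) (star (bket d (k+1)))

/-- The channel O : M_d(ℂ) → M_d(ℂ) with parameters μ₀,…,μ_{d−2}. -/
noncomputable def chanO (d : ℕ) (μ : ℕ → ℝ) (X : Matrix (Fin d) (Fin d) ℂ) :
    Matrix (Fin d) (Fin d) ℂ :=
  ∑ k ∈ Finset.range (d - 1), KrO d μ k * X * (KrO d μ k)ᴴ

/-- Kraus operator L_j = μ_j|j⟩⟨0| of O^c, for 0 ≤ j ≤ d−2. -/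
noncomputable def LrO (d : ℕ) (μ : ℕ → ℝ) (j : ℕ) : Matrix (Fin (d-1)) (Fin d) ℂ :=
  ((μ j : ℝ) : ℂ) • Matrix.vecMulVec (bket (d-1) j) (star (bket d 0))

/-- Kraus operator L_{d−1} = ∑_{i=1}^{d−1}|i−1⟩⟨i| of O^c. -/
noncomputable def VrO (d : ℕ) : Matrix (Fin (d-1)) (Fin d) ℂ :=
  Matrix.of fun a b => if (b : ℕ) = (a : ℕ) + 1 then 1 else 0

/-- The complementary channel O^c : M_d(ℂ) → M_{d−1}(ℂ). -/
noncomputable def chanOc (d : ℕ) (μ : ℕ → ℝ) (X : Matrix (Fin d) (Fin d) ℂ) :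
    Matrix (Fin (d-1)) (Fin (d-1)) ℂ :=
  (∑ j ∈ Finset.range (d - 1), LrO d μ j * X * (LrO d μ j)ᴴ) + VrO d * X * (VrO d)ᴴ

/-! Take ρ = ½(|0⟩⟨0| + |d−1⟩⟨d−1|). Both outputs are diagonal in the computational basis:
O(ρ) has eigenvalues μ₀²/2, …, μ_{d−2}²/2 and 1/2, while in O^c(ρ) the two eigenvalues
μ_{d−2}²/2 and 1/2 are merged into the single eigenvalue μ_{d−2}²/2 + 1/2, the rest being the
same. Since t ↦ t log t is strictly superadditive on positive reals, the merge strictly lowers the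
entropy, so S(O(ρ)) − S(O^c(ρ)) > 0 as soon as μ_{d−2} > 0. -/

open Polynomial in
theorem Matrix.IsHermitian.sum_comp_eigenvalues_diagonal {𝕜 n : Type*} [RCLike 𝕜] [Fintype n]
    [DecidableEq n] {z : n → 𝕜} (h : (diagonal z).IsHermitian) (g : ℝ → ℝ) :
    ∑ i, g (h.eigenvalues i) = ∑ i, g (RCLike.re (z i)) := by
  -- both the eigenvalues and the diagonal entries are the roots of the characteristic polynomial
  have hroots := h.roots_charpoly_eq_eigenvalues
  rw [charpoly_diagonal, roots_prod _ _ (Finset.prod_ne_zero_iff.2 fun i _ => X_sub_C_ne_zero _)]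
    at hroots
  simp only [roots_X_sub_C, Multiset.bind_singleton] at hroots
  have hsum := congrArg (fun s : Multiset 𝕜 => (s.map fun a => g (RCLike.re a)).sum) hroots
  simp only [Multiset.map_map, Function.comp_def, RCLike.ofReal_re] at hsum
  exact hsum.symm

theorem vnEntropy_diagonal {n : ℕ} (x : Fin n → ℝ) :
    vnEntropy (diagonal fun i => (x i : ℂ)) = -∑ i, x i * Real.logb 2 (x i) := by
  have h : (diagonal fun i => (x i : ℂ)).IsHermitian :=
    isHermitian_diagonal_of_self_adjoint _ (funext fun i => Complex.conj_ofReal (x i))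
  rw [vnEntropy, dif_pos h, h.sum_comp_eigenvalues_diagonal fun t => t * Real.logb 2 t]
  simp

theorem mul_vecMulVec_star_mul_conjTranspose {m n α : Type*} [Fintype n] [CommSemiring α]
    [StarRing α] (A : Matrix m n α) (u : n → α) :
    A * vecMulVec u (star u) * Aᴴ = vecMulVec (A *ᵥ u) (star (A *ᵥ u)) := by
  rw [mul_vecMulVec, vecMulVec_mul, vecMul_conjTranspose, star_star]

theorem Real.mul_logb_add_mul_logb_lt {β a b : ℝ} (hβ : 1 < β) (ha : 0 < a) (hb : 0 < b) :
    a * logb β a + b * logb β b < (a + b) * logb β (a + b) := by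
  have h1 := logb_lt_logb hβ ha (lt_add_of_pos_right a hb)
  have h2 := logb_lt_logb hβ hb (lt_add_of_pos_left b ha)
  nlinarith

theorem star_bket_dotProduct (d i : ℕ) (w : Fin d → ℂ) :
    star (bket d i) ⬝ᵥ w = if h : i < d then w ⟨i, h⟩ else 0 := by
  split_ifs with h
  · rw [dotProduct, Finset.sum_eq_single ⟨i, h⟩ (fun p _ hp => ?_) (by simp)]
    · simp [bket]
    · simp [bket, Fin.ext_iff.not.1 hp]
  · refine Finset.sum_eq_zero fun p _ => ?_
    simp [bket, show (p : ℕ) ≠ i by omega]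

theorem bproj_apply (d k : ℕ) (i j : Fin d) :
    bproj d k i j = if i = j ∧ (i : ℕ) = k then 1 else 0 := by
  simp only [bproj, vecMulVec_apply, bket, Pi.star_apply]
  by_cases hi : (i : ℕ) = k <;> by_cases hj : (j : ℕ) = k <;> simp [hi, hj, Fin.ext_iff]; omega

theorem trace_bproj {d k : ℕ} (hk : k < d) : (bproj d k).trace = 1 := by
  rw [bproj, trace_vecMulVec, dotProduct_comm, star_bket_dotProduct, dif_pos hk]
  simp [bket]

section Kraus

variable {d : ℕ} (μ : ℕ → ℝ)

theorem KrO_mulVec_bket_zero (hd : 0 < d) (k : ℕ) :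
    KrO d μ k *ᵥ bket d 0 = (μ k : ℂ) • bket d k := by
  simp [KrO, add_mulVec, smul_mulVec, vecMulVec_mulVec, star_bket_dotProduct, hd, bket]

theorem KrO_mulVec_bket_last (hd : 2 ≤ d) (k : ℕ) :
    KrO d μ k *ᵥ bket d (d - 1) = if k = d - 2 then bket d (d - 1) else 0 := by
  by_cases hk : k = d - 2
  · simp [KrO, add_mulVec, smul_mulVec, vecMulVec_mulVec, star_bket_dotProduct, bket, hk,
      show 0 ≠ d - 1 by omega, show d - 2 + 1 = d - 1 by omega, show d ≠ 0 by omega]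
  · simp [KrO, add_mulVec, smul_mulVec, vecMulVec_mulVec, star_bket_dotProduct, bket, hk,
      show 0 ≠ d - 1 by omega, show k + 1 ≠ d - 1 by omega]

theorem LrO_mulVec_bket_zero (hd : 0 < d) (j : ℕ) :
    LrO d μ j *ᵥ bket d 0 = (μ j : ℂ) • bket (d - 1) j := by
  simp [LrO, smul_mulVec, vecMulVec_mulVec, star_bket_dotProduct, hd, bket]

theorem LrO_mulVec_bket_last (hd : 2 ≤ d) (j : ℕ) : LrO d μ j *ᵥ bket d (d - 1) = 0 := by
  simp [LrO, smul_mulVec, vecMulVec_mulVec, star_bket_dotProduct, bket, show 0 ≠ d - 1 by omega]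

end Kraus

theorem VrO_mulVec_apply {d : ℕ} (v : Fin d → ℂ) (a : Fin (d - 1)) :
    (VrO d *ᵥ v) a = v ⟨a + 1, by omega⟩ := by
  rw [mulVec, dotProduct, Finset.sum_eq_single ⟨a + 1, by omega⟩ (fun p _ hp => ?_) (by simp)]
  · simp [VrO]
  · simp [VrO, Fin.ext_iff.not.1 hp]

theorem VrO_mulVec_bket_zero (d : ℕ) : VrO d *ᵥ bket d 0 = 0 := by
  ext a
  simp [VrO_mulVec_apply, bket]

theorem VrO_mulVec_bket_last {d : ℕ} (hd : 2 ≤ d) :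
    VrO d *ᵥ bket d (d - 1) = bket (d - 1) (d - 2) := by
  ext a
  simp [VrO_mulVec_apply, bket, show ∀ n : ℕ, n + 1 = d - 1 ↔ n = d - 2 by omega]

theorem vnEntropy_sum_smul_bproj_add_smul_bproj {d m : ℕ} (hm : m < d) (w : ℕ → ℝ) (c : ℝ) :
    vnEntropy (∑ k ∈ Finset.range m, (w k : ℂ) • bproj d k + (c : ℂ) • bproj d m) =
      -(∑ k ∈ Finset.range m, w k * Real.logb 2 (w k) + c * Real.logb 2 c) := by
  set x : ℕ → ℝ := fun k => if k < m then w k else if k = m then c else 0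
  have hdiag : ∑ k ∈ Finset.range m, (w k : ℂ) • bproj d k + (c : ℂ) • bproj d m =
      diagonal fun i : Fin d => (x i : ℂ) := by
    ext i j
    by_cases hij : i = j
    · subst hij
      rcases lt_trichotomy (i : ℕ) m with h | h | h
      · simp [bproj_apply, x, Matrix.sum_apply, h, h.ne]
      · simp [bproj_apply, x, Matrix.sum_apply, h]
      · simp [bproj_apply, x, Matrix.sum_apply, h.ne', not_lt.2 h.le]
    · simp [bproj_apply, Matrix.sum_apply, hij]
  obtain ⟨r, rfl⟩ := Nat.exists_eq_add_of_le hm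
  rw [hdiag, vnEntropy_diagonal, Fin.sum_univ_eq_sum_range (fun k => x k * Real.logb 2 (x k)),
    Finset.sum_range_add, Finset.sum_range_succ]
  have hlow : ∑ k ∈ Finset.range m, x k * Real.logb 2 (x k) =
      ∑ k ∈ Finset.range m, w k * Real.logb 2 (w k) :=
    Finset.sum_congr rfl fun k hk => by simp [x, Finset.mem_range.1 hk]
  have hhigh : ∑ k ∈ Finset.range r, x (m + 1 + k) * Real.logb 2 (x (m + 1 + k)) = 0 :=
    Finset.sum_eq_zero fun k _ => by
      simp [x, show ¬ m + 1 + k < m by omega, show m + 1 + k ≠ m by omega]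
  rw [hlow, hhigh]
  simp [x]

noncomputable def endpointState (d : ℕ) : Matrix (Fin d) (Fin d) ℂ :=
  (1 / 2 : ℂ) • (bproj d 0 + bproj d (d - 1))

theorem endpointState_posSemidef (d : ℕ) : (endpointState d).PosSemidef :=
  ((posSemidef_vecMulVec_self_star _).add (posSemidef_vecMulVec_self_star _)).smul (by positivity)

theorem trace_endpointState {d : ℕ} (hd : 2 ≤ d) : (endpointState d).trace = 1 := by
  rw [endpointState, trace_smul, trace_add, trace_bproj (by omega), trace_bproj (by omega)]
  norm_num

theorem mul_endpointState_mul_conjTranspose {m : Type*} {d : ℕ} (A : Matrix m (Fin d) ℂ) :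
    A * endpointState d * Aᴴ = (1 / 2 : ℂ) •
      (vecMulVec (A *ᵥ bket d 0) (star (A *ᵥ bket d 0)) +
        vecMulVec (A *ᵥ bket d (d - 1)) (star (A *ᵥ bket d (d - 1)))) := by
  rw [endpointState, Matrix.mul_smul, Matrix.smul_mul, Matrix.mul_add, Matrix.add_mul, bproj, bproj,
    mul_vecMulVec_star_mul_conjTranspose, mul_vecMulVec_star_mul_conjTranspose]

theorem vecMulVec_ofReal_smul_star {n : Type*} (r : ℝ) (u : n → ℂ) :
    vecMulVec ((r : ℂ) • u) (star ((r : ℂ) • u)) = ((r ^ 2 : ℝ) : ℂ) • vecMulVec u (star u) := by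
  rw [star_smul, smul_vecMulVec, vecMulVec_smul, smul_smul, RCLike.star_def, Complex.conj_ofReal,
    Complex.ofReal_pow, sq]

section Outputs

variable {d : ℕ} (hd : 2 ≤ d) (μ : ℕ → ℝ)
include hd

theorem chanO_endpointState :
    chanO d μ (endpointState d) =
      ∑ k ∈ Finset.range (d - 1), ((μ k ^ 2 / 2 : ℝ) : ℂ) • bproj d k +
        ((1 / 2 : ℝ) : ℂ) • bproj d (d - 1) := by
  have hterm : ∀ k, KrO d μ k * endpointState d * (KrO d μ k)ᴴ =
      ((μ k ^ 2 / 2 : ℝ) : ℂ) • bproj d k +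
        if k = d - 2 then ((1 / 2 : ℝ) : ℂ) • bproj d (d - 1) else 0 := by
    intro k
    rw [mul_endpointState_mul_conjTranspose, KrO_mulVec_bket_zero μ (by omega),
      KrO_mulVec_bket_last μ hd, vecMulVec_ofReal_smul_star]
    split_ifs
    · rw [bproj, bproj]
      module
    · rw [bproj, star_zero, vecMulVec_zero]
      module
  rw [chanO, Finset.sum_congr rfl fun k _ => hterm k, Finset.sum_add_distrib,
    Finset.sum_ite_eq', if_pos (Finset.mem_range.2 (by omega))]

theorem chanOc_endpointState :
    chanOc d μ (endpointState d) =
      ∑ j ∈ Finset.range (d - 2), ((μ j ^ 2 / 2 : ℝ) : ℂ) • bproj (d - 1) j +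
        ((μ (d - 2) ^ 2 / 2 + 1 / 2 : ℝ) : ℂ) • bproj (d - 1) (d - 2) := by
  have hterm : ∀ j, LrO d μ j * endpointState d * (LrO d μ j)ᴴ =
      ((μ j ^ 2 / 2 : ℝ) : ℂ) • bproj (d - 1) j := by
    intro j
    rw [mul_endpointState_mul_conjTranspose, LrO_mulVec_bket_zero μ (by omega),
      LrO_mulVec_bket_last μ hd, vecMulVec_ofReal_smul_star]
    rw [bproj, star_zero, vecMulVec_zero]
    module
  have hV : VrO d * endpointState d * (VrO d)ᴴ = ((1 / 2 : ℝ) : ℂ) • bproj (d - 1) (d - 2) := by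
    rw [mul_endpointState_mul_conjTranspose, VrO_mulVec_bket_zero, VrO_mulVec_bket_last hd]
    simp [bproj]
  rw [chanOc, Finset.sum_congr rfl fun j _ => hterm j, hV, show d - 1 = d - 2 + 1 by omega,
    Finset.sum_range_succ, add_assoc, ← add_smul, ← Complex.ofReal_add]

end Outputs

theorem stmt13_general (d : ℕ) (hd : 3 ≤ d) (μ : ℕ → ℝ)
    (hμpos : ∀ j < d - 1, 0 < μ j) :
    ∃ ρ : Matrix (Fin d) (Fin d) ℂ, ρ.PosSemidef ∧ ρ.trace = 1 ∧
      0 < vnEntropy (chanO d μ ρ) - vnEntropy (chanOc d μ ρ) := by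
  refine ⟨endpointState d, endpointState_posSemidef d, trace_endpointState (by omega), ?_⟩
  rw [chanO_endpointState (by omega), chanOc_endpointState (by omega),
    vnEntropy_sum_smul_bproj_add_smul_bproj (by omega),
    vnEntropy_sum_smul_bproj_add_smul_bproj (by omega), show d - 1 = d - 2 + 1 by omega,
    Finset.sum_range_succ]
  have hμ : 0 < μ (d - 2) ^ 2 / 2 := by
    have := hμpos (d - 2) (by omega)
    positivity
  linarith [Real.mul_logb_add_mul_logb_lt one_lt_two hμ one_half_pos]

/-- If all μ_j are strictly positive, the channel coherent information of O is
strictly positive: some input density matrix gives positive entropy bias. -/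
theorem stmt13 (d : ℕ) (hd : 3 ≤ d) (μ : ℕ → ℝ)
    (hμpos : ∀ j < d - 1, 0 < μ j)
    (hμsum : ∑ j ∈ Finset.range (d - 1), (μ j) ^ 2 = 1) :
    ∃ ρ : Matrix (Fin d) (Fin d) ℂ, ρ.PosSemidef ∧ ρ.trace = 1 ∧
      0 < vnEntropy (chanO d μ ρ) - vnEntropy (chanOc d μ ρ) :=
  stmt13_general d hd μ hμpos
end
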